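/- arXiv:2601.02948 — 3 statements merged into one kernel-verified Lean document; each statement's English description precedes it below -/
import Mathlib

section
/- Let Z, Z^(1), …, Z^(k) be k+1 independent and identically distributed real-valued random variables on a probability space, and let 1 ≤ r ≤ k be an integer. Let Z^((r)) denote the r-th order statistic (r-th smallest value) of Z^(1), …, Z^(k). Then Pr[Z ≤ Z^((r))] ≥ r/(k+1). -/
/-!
Put `W = (Z, Z⁽¹⁾, …, Z⁽ᵏ⁾)` and let `Aⱼ` be the event that fewer than `r` of the `Wᵢ` lie strictly
below `Wⱼ`. At every outcome the indices of the `r` smallest values (in sorted order) all lie in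
their event, so `∑ⱼ μ(Aⱼ) ≥ r`; an i.i.d. vector is exchangeable, so all `μ(Aⱼ)` are equal and
`μ(A₀) ≥ r / (k + 1)`. On `A₀` fewer than `r` of the `Z⁽ⁱ⁾` lie strictly below `Z`, which forces
`Z ≤ Z⁽⁽ʳ⁾⁾`.
-/

open MeasureTheory ProbabilityTheory

/-- The `r`-th smallest value (1-indexed) among the `k` values `v 0, …, v (k-1)`. -/
noncomputable def orderStat {k : ℕ} (r : ℕ) (v : Fin k → ℝ) : ℝ :=
  ((List.ofFn v).insertionSort (· ≤ ·)).getD (r - 1) 0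

open Finset
open scoped ENNReal

theorem Finset.card_filter_comp_perm {ι : Type*} [Fintype ι] (p : ι → Prop) [DecidablePred p]
    (σ : Equiv.Perm ι) : #{i | p (σ i)} = #{i | p i} :=
  card_equiv σ (by simp)

namespace Tuple

variable {n : ℕ} {α : Type*} [LinearOrder α]

theorem lt_card_filter_lt_of_apply_sort_lt (w : Fin n → α) {p : Fin n} {a : α}
    (h : w (sort w p) < a) : (p : ℕ) < #{i | w i < a} := by
  rw [← card_filter_comp_perm (w · < a) (sort w)]
  exact (lt_card_lt_iff_apply_lt_of_monotone (monotone_sort w)).2 h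

theorem card_filter_lt_apply_sort_le (w : Fin n → α) (p : Fin n) :
    #{i | w i < w (sort w p)} ≤ p := by
  rw [← card_filter_comp_perm (w · < w (sort w p)) (sort w), ← not_lt]
  exact fun h => lt_irrefl _ ((lt_card_lt_iff_apply_lt_of_monotone (monotone_sort w)).1 h)

theorem le_card_filter_card_filter_lt_lt (w : Fin n → α) {r : ℕ} (hr : r ≤ n) :
    r ≤ #{j | #{i | w i < w j} < r} := by
  calc r = #(({p | (p : ℕ) < r} : Finset (Fin n)).map (sort w).toEmbedding) := by
        rw [card_map, Fin.card_filter_val_lt, min_eq_right hr]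
    _ ≤ #{j | #{i | w i < w j} < r} := by
        refine card_le_card fun j hj => ?_
        obtain ⟨p, hp, rfl⟩ := mem_map.1 hj
        rw [mem_filter] at hp ⊢
        exact ⟨mem_univ _, (card_filter_lt_apply_sort_le w p).trans_lt hp.2⟩

end Tuple

theorem orderStat_eq_apply_sort {k r : ℕ} (v : Fin k → ℝ) (hr1 : 1 ≤ r) (hrk : r ≤ k) :
    orderStat r v = v (Tuple.sort v ⟨r - 1, by omega⟩) := by
  have hsort : (List.ofFn v).insertionSort (· ≤ ·) = List.ofFn (v ∘ Tuple.sort v) :=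
    ((List.perm_insertionSort _ _).trans ((Tuple.sort v).ofFn_comp_perm v).symm).eq_of_pairwise'
      (List.pairwise_insertionSort _ _) (Tuple.monotone_sort v).sortedLE_ofFn.pairwise
  rw [orderStat, hsort, List.getD_eq_getElem _ _ (by simp; omega)]
  simp

theorem le_orderStat_of_card_filter_lt {k r : ℕ} {v : Fin k → ℝ} {z : ℝ} (hrk : r ≤ k)
    (h : #{i | v i < z} < r) : z ≤ orderStat r v := by
  have hr1 : 1 ≤ r := Nat.one_le_of_lt h
  rw [orderStat_eq_apply_sort v hr1 hrk]
  by_contra! hlt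
  have hcard := Tuple.lt_card_filter_lt_of_apply_sort_lt v hlt
  simp only at hcard
  omega

theorem ProbabilityTheory.iIndepFun.identDistrib_comp_perm {Ω ι β : Type*} [MeasurableSpace Ω]
    {μ : Measure Ω} [Fintype ι] [MeasurableSpace β] {W : ι → Ω → β}
    (hmeas : ∀ i, Measurable (W i)) (hindep : iIndepFun W μ)
    (hident : ∀ i j, IdentDistrib (W i) (W j) μ μ) (σ : Equiv.Perm ι) :
    IdentDistrib (fun ω i => W (σ i) ω) (fun ω i => W i ω) μ μ where
  aemeasurable_fst := (measurable_pi_lambda _ fun i => hmeas (σ i)).aemeasurable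
  aemeasurable_snd := (measurable_pi_lambda _ hmeas).aemeasurable
  map_eq := by
    rw [(hindep.precomp σ.injective).map_fun_eq_pi_map fun i => (hmeas (σ i)).aemeasurable,
      hindep.map_fun_eq_pi_map fun i => (hmeas i).aemeasurable]
    exact congrArg Measure.pi (funext fun i => (hident (σ i) i).map_eq)

theorem MeasureTheory.natCast_mul_measure_univ_le_sum {Ω ι : Type*} [MeasurableSpace Ω]
    (μ : Measure Ω) (s : Finset ι) {A : ι → Set Ω} [∀ j, DecidablePred (· ∈ A j)]
    (hA : ∀ j, MeasurableSet (A j)) {r : ℕ}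
    (h : ∀ ω, r ≤ #{j ∈ s | ω ∈ A j}) : (r : ℝ≥0∞) * μ Set.univ ≤ ∑ j ∈ s, μ (A j) := by
  calc (r : ℝ≥0∞) * μ Set.univ = ∫⁻ _, (r : ℝ≥0∞) ∂μ := (lintegral_const _).symm
    _ ≤ ∫⁻ ω, ∑ j ∈ s, (A j).indicator 1 ω ∂μ := by
        refine lintegral_mono fun ω => ?_
        simp only [Set.indicator_apply, Pi.one_apply, sum_boole]
        exact_mod_cast h ω
    _ = ∑ j ∈ s, μ (A j) := by
        rw [lintegral_finsetSum _ fun j _ => measurable_one.indicator (hA j)]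
        exact sum_congr rfl fun j _ => lintegral_indicator_one (hA j)

theorem measurableSet_card_filter_lt_lt {ι α : Type*} [Fintype ι] [LinearOrder α]
    [TopologicalSpace α] [OrderClosedTopology α] [SecondCountableTopology α] [MeasurableSpace α]
    [OpensMeasurableSpace α] (j : ι) (r : ℕ) :
    MeasurableSet {w : ι → α | #{i | w i < w j} < r} := by
  have hcard : Measurable fun w : ι → α => #{i | w i < w j} := by
    simp_rw [card_filter]
    exact Finset.measurable_sum _ fun i _ => Measurable.ite
      (measurableSet_lt (measurable_pi_apply i) (measurable_pi_apply j)) measurable_const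
      measurable_const
  exact hcard (MeasurableSet.of_discrete (s := Set.Iio r))

theorem prob_le_orderStat_ge_general
    {Ω : Type*} [MeasurableSpace Ω] (μ : Measure Ω) [IsProbabilityMeasure μ]
    (k : ℕ) (Z : Ω → ℝ) (Zc : Fin k → Ω → ℝ)
    (W : Fin (k + 1) → Ω → ℝ) (hW : W = Fin.cons Z Zc)
    (hmeas : ∀ i, Measurable (W i))
    (hindep : iIndepFun W μ)
    (hident : ∀ i j : Fin (k + 1), IdentDistrib (W i) (W j) μ μ)
    (r : ℕ) (hrk : r ≤ k) :
    ENNReal.ofReal ((r : ℝ) / ((k : ℝ) + 1)) ≤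
      μ {ω | Z ω ≤ orderStat r (fun i => Zc i ω)} := by
  set A : Fin (k + 1) → Set Ω := fun j => {ω | #{i | W i ω < W j ω} < r}
  have hA : ∀ j, MeasurableSet (A j) := fun j =>
    measurable_pi_lambda _ hmeas (measurableSet_card_filter_lt_lt j r)
  have hA_eq : ∀ j, μ (A j) = μ (A 0) := by
    intro j
    have hAj : A j = (fun ω i => W (Equiv.swap 0 j i) ω) ⁻¹' {w | #{i | w i < w 0} < r} := by
      ext ω
      simp [A, card_filter_comp_perm (W · ω < W j ω)]
    rw [hAj, (hindep.identDistrib_comp_perm hmeas hident _).measure_mem_eq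
      (measurableSet_card_filter_lt_lt 0 r)]
    rfl
  have hcount : (r : ℝ≥0∞) ≤ (k + 1) * μ (A 0) := by
    calc (r : ℝ≥0∞) = r * μ Set.univ := by simp
      _ ≤ ∑ j, μ (A j) := natCast_mul_measure_univ_le_sum μ univ hA fun ω =>
          Tuple.le_card_filter_card_filter_lt_lt (fun i => W i ω) (by omega)
      _ = (k + 1) * μ (A 0) := by simp [hA_eq]
  have hsub : A 0 ⊆ {ω | Z ω ≤ orderStat r fun i => Zc i ω} := fun ω hω =>
    le_orderStat_of_card_filter_lt hrk (by simpa [A, hW, Fin.card_filter_univ_succ] using hω)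
  calc ENNReal.ofReal (r / (k + 1)) = r / (k + 1) := by
        rw [ENNReal.ofReal_div_of_pos (by positivity)]
        norm_cast
    _ ≤ μ (A 0) := ENNReal.div_le_of_le_mul' hcount
    _ ≤ _ := measure_mono hsub

/-- Let `Z, Z⁽¹⁾, …, Z⁽ᵏ⁾` be `k+1` i.i.d. real random variables and `1 ≤ r ≤ k`.
Then `Pr[Z ≤ Z⁽⁽ʳ⁾⁾] ≥ r / (k+1)`, where `Z⁽⁽ʳ⁾⁾` is the `r`-th order statistic
of `Z⁽¹⁾, …, Z⁽ᵏ⁾`. -/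
theorem prob_le_orderStat_ge
    {Ω : Type*} [MeasurableSpace Ω] (μ : Measure Ω) [IsProbabilityMeasure μ]
    (k : ℕ) (Z : Ω → ℝ) (Zc : Fin k → Ω → ℝ)
    (W : Fin (k + 1) → Ω → ℝ) (hW : W = Fin.cons Z Zc)
    (hmeas : ∀ i, Measurable (W i))
    (hindep : iIndepFun W μ)
    (hident : ∀ i j : Fin (k + 1), IdentDistrib (W i) (W j) μ μ)
    (r : ℕ) (hr1 : 1 ≤ r) (hrk : r ≤ k) :
    ENNReal.ofReal ((r : ℝ) / ((k : ℝ) + 1)) ≤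
      μ {ω | Z ω ≤ orderStat r (fun i => Zc i ω)} :=
  prob_le_orderStat_ge_general μ k Z Zc W hW hmeas hindep hident r hrk
end

section
/- Let k ≥ 1 and let y_0, y_1, …, y_k be real numbers. Fix an integer 1 ≤ r ≤ k, and for each index i ∈ {0, …, k} let q_i denote the r-th smallest value among the k numbers {y_j : j ≠ i}. Then the number of indices i with y_i > q_i is at most k + 1 − r. -/
/-!
Let `A` be the set of indices `i` with `q i < y i`, and let `i ∈ A` minimise `y` on `A`.
Since the `r`-th smallest of the values `y j`, `j ≠ i`, lies below `y i`, at least `r`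
indices `j` have `y j < y i`; by minimality none of them lies in `A`. Hence
`#A + r ≤ k + 1`.
-/

/-- The `r`-th smallest value (1-indexed) of a list of reals, counted with
multiplicity. -/
noncomputable def rthSmallest (r : ℕ) (l : List ℝ) : ℝ :=
  (l.insertionSort (· ≤ ·)).getD (r - 1) 0

open Finset

theorem List.countP_ofFn {α : Type*} {n : ℕ} (f : Fin n → α) (p : α → Prop)
    [DecidablePred p] :
    (List.ofFn f).countP (p ·) = #{i | p (f i)} := by
  rw [← Multiset.coe_countP, ← Fin.univ_val_map, Multiset.countP_map]
  rfl

theorem List.SortedLE.lt_countP_lt_of_getElem_lt {α : Type*} [LinearOrder α] {s : List α}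
    (hs : s.SortedLE) {n : ℕ} (hn : n < s.length) {t : α} (h : s[n] < t) :
    n < s.countP (· < t) := by
  have htake : (s.take (n + 1)).countP (· < t) = n + 1 := by
    rw [List.countP_eq_length.2, List.length_take_of_le hn]
    intro a ha
    obtain ⟨m, hm, rfl⟩ := List.mem_take_iff_getElem.1 ha
    exact decide_eq_true <| (hs.getElem_le_getElem_of_le (by omega)).trans_lt h
  have := (List.take_sublist (n + 1) s).countP_le (p := (· < t))
  omega

theorem le_countP_lt_of_rthSmallest_lt {r : ℕ} {l : List ℝ} (hr : r ≤ l.length) {t : ℝ}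
    (h : rthSmallest r l < t) : r ≤ l.countP (· < t) := by
  rcases Nat.eq_zero_or_pos r with rfl | hr0
  · exact Nat.zero_le _
  have hlen : r - 1 < (l.insertionSort (· ≤ ·)).length := by
    rw [(List.perm_insertionSort _ l).length_eq]; omega
  rw [rthSmallest, List.getD_eq_getElem _ _ hlen] at h
  have := List.sortedLE_insertionSort.lt_countP_lt_of_getElem_lt hlen h
  rw [(List.perm_insertionSort _ l).countP_eq] at this
  omega

theorem Finset.card_le_card_sub_of_forall_le_card_lt {ι α : Type*} [Fintype ι] [LinearOrder α]
    (y : ι → α) (A : Finset ι) (r : ℕ) (hA : ∀ i ∈ A, r ≤ #{j | y j < y i}) :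
    #A ≤ Fintype.card ι - r := by
  classical
  rcases A.eq_empty_or_nonempty with rfl | hne
  · simp
  obtain ⟨i, hi, hmin⟩ := A.exists_min_image y hne
  have hdisj : Disjoint A ({j | y j < y i} : Finset ι) :=
    disjoint_left.2 fun j hjA hj ↦ (not_lt.2 (hmin j hjA)) (mem_filter.1 hj).2
  have := card_union_of_disjoint hdisj ▸ card_le_univ (A ∪ ({j | y j < y i} : Finset ι))
  have := hA i hi
  omega

theorem le_card_lt_of_rthSmallest_eraseIdx_lt {k r : ℕ} (hrk : r ≤ k) (y : Fin (k + 1) → ℝ)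
    (i : Fin (k + 1)) {t : ℝ} (h : rthSmallest r ((List.ofFn y).eraseIdx i) < t) :
    r ≤ #{j | y j < t} := by
  have hlen : ((List.ofFn y).eraseIdx i).length = k := by
    rw [List.length_eraseIdx_of_lt (by simpa using i.is_lt), List.length_ofFn, Nat.add_sub_cancel]
  calc r ≤ ((List.ofFn y).eraseIdx i).countP (· < t) :=
        le_countP_lt_of_rthSmallest_lt (hlen.symm ▸ hrk) h
    _ ≤ (List.ofFn y).countP (· < t) := (List.eraseIdx_sublist _ _).countP_le
    _ = #{j | y j < t} := List.countP_ofFn y (· < t)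

theorem card_exceeding_leaveOneOut_quantile_le_general
    (k : ℕ) (y : Fin (k + 1) → ℝ)
    (r : ℕ) (hrk : r ≤ k)
    (q : Fin (k + 1) → ℝ)
    (hq : ∀ i : Fin (k + 1), q i = rthSmallest r ((List.ofFn y).eraseIdx i)) :
    (Finset.univ.filter fun i : Fin (k + 1) => q i < y i).card ≤ k + 1 - r := by
  simpa using Finset.card_le_card_sub_of_forall_le_card_lt y _ r fun i hi ↦
    le_card_lt_of_rthSmallest_eraseIdx_lt hrk y i (hq i ▸ (mem_filter.1 hi).2)

/-- Let `k ≥ 1`, `y₀, …, y_k` be reals, and `1 ≤ r ≤ k`.  For each `i`, let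
`q i` be the `r`-th smallest value among the `k` numbers `{y j : j ≠ i}`.
Then the number of indices `i` with `y i > q i` is at most `k + 1 - r`. -/
theorem card_exceeding_leaveOneOut_quantile_le
    (k : ℕ) (hk : 1 ≤ k) (y : Fin (k + 1) → ℝ)
    (r : ℕ) (hr1 : 1 ≤ r) (hrk : r ≤ k)
    (q : Fin (k + 1) → ℝ)
    (hq : ∀ i : Fin (k + 1), q i = rthSmallest r ((List.ofFn y).eraseIdx i)) :
    (Finset.univ.filter fun i : Fin (k + 1) => q i < y i).card ≤ k + 1 - r :=
  card_exceeding_leaveOneOut_quantile_le_general k y r hrk q hq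
end

section
/- Let Θ be a measurable space and let θ, θ^(1), …, θ^(k) be k+1 independent and identically distributed Θ-valued random variables on a common probability space. Fix an initial state x̂_0 in a measurable space 𝒳, controls u_0, …, u_{N−1}, and a dynamics map f such that each map ϑ ↦ x_j(ϑ) is measurable, where x_0(ϑ) = x̂_0 and x_{j+1}(ϑ) = f(x_j(ϑ), u_j, ϑ). Let h : 𝒳 → ℝ be measurable, define the non-conformity score ρ(ϑ) = −min_{j=0,…,N} h(x_j(ϑ)), let ρ^((r)) denote the r-th order statistic of ρ(θ^(1)), …, ρ(θ^(k)) with the convention ρ^((k+1)) = +∞, and set r = ⌈(k+1)(1−δ)⌉ for δ ∈ (0,1). Then the probability of the event { ρ^((r)) > 0 } ∪ { x_j(θ) ∈ C for all j = 0, …, N } is at least 1 − δ; that is, with probability at least 1 − δ, whenever the calibrated threshold satisfies ρ^((r)) ≤ 0 the true trajectory remains in the safe set C = {x ∈ 𝒳 : h(x) ≥ 0} at every step of the horizon. -/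
/-!
Write `Y₀ = ρ(θ)` and `Yᵢ = ρ(θ⁽ⁱ⁾)`. Being i.i.d., the `Yⱼ` have a joint law invariant under
permutations of the indices, so the events `Aⱼ = {fewer than r of the Yᵢ lie strictly below Yⱼ}`
all have the same probability. At every outcome at least `r` of the `k + 1` events `Aⱼ` occur
(those `j` with `Yⱼ` at most the `r`-th smallest value), hence `μ A₀ ≥ r / (k + 1) ≥ 1 - δ`.
On `A₀` we have `ρ(θ) ≤ ρ⁽⁽ʳ⁾⁾`, so `ρ⁽⁽ʳ⁾⁾ ≤ 0` forces `h (x_j(θ)) ≥ 0` for every `j ≤ N`.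
-/

open MeasureTheory ProbabilityTheory

section

open Finset
open scoped ENNReal

namespace List

variable {α : Type*} [LinearOrder α] {l : List α}

theorem Pairwise.succ_le_countP_le_getElem (hl : l.Pairwise (· ≤ ·)) {r : ℕ} (hr : r < l.length) :
    r + 1 ≤ l.countP (· ≤ l[r]) := by
  have htake : (l.take (r + 1)).countP (· ≤ l[r]) = r + 1 := by
    rw [countP_eq_length.mpr, length_take_of_le hr]
    intro b hb
    obtain ⟨i, hi, rfl⟩ := mem_iff_getElem.mp hb
    simp only [getElem_take, decide_eq_true_eq]
    exact hl.rel_get_of_le (a := ⟨i, by simp at hi; omega⟩) (b := ⟨r, hr⟩) (by simp at hi ⊢; omega)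
  exact htake ▸ (take_sublist _ _).countP_le

theorem Pairwise.countP_lt_getElem_le (hl : l.Pairwise (· ≤ ·)) {r : ℕ} (hr : r < l.length) :
    l.countP (· < l[r]) ≤ r := by
  have hdrop : (l.drop r).countP (· < l[r]) = 0 := by
    rw [countP_eq_zero]
    intro b hb
    obtain ⟨i, hi, rfl⟩ := mem_iff_getElem.mp hb
    simp only [getElem_drop, decide_eq_true_eq, not_lt]
    exact hl.rel_get_of_le (a := ⟨r, hr⟩) (b := ⟨r + i, by simp at hi; omega⟩) (by simp)
  calc l.countP (· < l[r]) = (l.take r).countP (· < l[r]) + (l.drop r).countP (· < l[r]) := by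
        rw [← countP_append, take_append_drop]
    _ ≤ r := by
        rw [hdrop, add_zero]
        exact countP_le_length.trans (length_take_le _ _)

theorem countP_ofFn_s7 {β : Type*} {n : ℕ} (v : Fin n → β) (p : β → Prop) [DecidablePred p] :
    (ofFn v).countP (p ·) = #{i | p (v i)} := by
  rw [← Multiset.coe_countP, ← Fin.univ_val_map, Multiset.countP_map, Finset.card,
    Finset.filter_val]

end List

section OrderStatistic

variable {n r : ℕ} (v : Fin n → ℝ)

theorem orderStat_succ_eq_getElem (hr : r < n) :
    orderStat (r + 1) v = ((List.ofFn v).insertionSort (· ≤ ·))[r]'(by simpa) := by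
  rw [orderStat, Nat.add_sub_cancel, List.getD_eq_getElem]

theorem le_card_filter_le_orderStat (hr : r ≤ n) : r ≤ #{i | v i ≤ orderStat r v} := by
  obtain _ | r := r
  · exact Nat.zero_le _
  rw [orderStat_succ_eq_getElem v hr, ← List.countP_ofFn_s7 v (· ≤ _),
    ← (List.perm_insertionSort (· ≤ ·) (List.ofFn v)).countP_eq]
  exact (List.pairwise_insertionSort (· ≤ ·) (List.ofFn v)).succ_le_countP_le_getElem _

theorem card_filter_lt_orderStat_lt (hr0 : 0 < r) (hr : r ≤ n) :
    #{i | v i < orderStat r v} < r := by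
  obtain ⟨r, rfl⟩ := Nat.exists_eq_add_one_of_ne_zero hr0.ne'
  rw [orderStat_succ_eq_getElem v hr, ← List.countP_ofFn_s7 v (· < _),
    ← (List.perm_insertionSort (· ≤ ·) (List.ofFn v)).countP_eq, Nat.lt_succ_iff]
  exact (List.pairwise_insertionSort (· ≤ ·) (List.ofFn v)).countP_lt_getElem_le _

theorem le_orderStat_of_card_filter_lt_s7 (hr : r ≤ n) {a : ℝ} (ha : #{i | v i < a} < r) :
    a ≤ orderStat r v := by
  by_contra! hlt
  have hsub : (univ.filter fun i => v i ≤ orderStat r v) ⊆ univ.filter fun i => v i < a :=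
    Finset.monotone_filter_right _ fun i _ hi => hi.trans_lt hlt
  exact (le_card_filter_le_orderStat v hr |>.trans (card_le_card hsub)).not_gt ha

theorem le_card_filter_card_filter_lt (hr : r ≤ n) : r ≤ #{j | #{i | v i < v j} < r} := by
  obtain rfl | hr0 := r.eq_zero_or_pos
  · exact Nat.zero_le _
  refine (le_card_filter_le_orderStat v hr).trans (card_le_card ?_)
  refine Finset.monotone_filter_right _ fun j _ hj => ?_
  refine lt_of_le_of_lt (card_le_card ?_) (card_filter_lt_orderStat_lt v hr0 hr)
  exact Finset.monotone_filter_right _ fun i _ hi => hi.trans_le hj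

end OrderStatistic

theorem nonneg_of_neg_inf'_nonpos {N : ℕ} {g : ℕ → ℝ}
    (hg : -(univ.inf' univ_nonempty fun j : Fin (N + 1) => g j) ≤ 0) : ∀ j ≤ N, 0 ≤ g j :=
  fun j hj => (le_inf'_iff _ _).mp (neg_nonpos.mp hg) ⟨j, Nat.lt_succ_of_le hj⟩ (mem_univ _)

theorem Finset.measurable_inf'_fun {δ ι α : Type*} [MeasurableSpace δ] [MeasurableSpace α]
    [SemilatticeInf α] [MeasurableInf₂ α] {s : Finset ι} (hs : s.Nonempty) {f : ι → δ → α}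
    (hf : ∀ i ∈ s, Measurable (f i)) : Measurable fun a => s.inf' hs fun i => f i a := by
  rw [show (fun a => s.inf' hs fun i => f i a) = s.inf' hs f from
    funext fun a => (Finset.inf'_apply hs f a).symm]
  exact Finset.inf'_induction hs f (p := Measurable) (fun _ hf _ hg => hf.inf hg) hf

theorem measurableSet_card_filter_lt {ι : Type*} [Fintype ι] (j : ι) (r : ℕ) :
    MeasurableSet {y : ι → ℝ | #{i | y i < y j} < r} := by
  have hcard : Measurable fun y : ι → ℝ => #{i | y i < y j} := by
    simp only [card_filter]
    exact Finset.measurable_sum _ fun i _ =>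
      Measurable.ite (measurableSet_lt (measurable_pi_apply i) (measurable_pi_apply j))
        measurable_const measurable_const
  exact hcard (measurableSet_lt measurable_id measurable_const)

theorem natCast_mul_le_sum_measure {α ι : Type*} [MeasurableSpace α] {ν : Measure α}
    [Fintype ι] {s : ι → Set α} [∀ a, DecidablePred fun i => a ∈ s i]
    (hs : ∀ i, MeasurableSet (s i)) {r : ℕ} (hr : ∀ a, r ≤ #{i | a ∈ s i}) :
    r * ν Set.univ ≤ ∑ i, ν (s i) := by
  have hcount : ∀ a, ∑ i, (s i).indicator 1 a = (#{i | a ∈ s i} : ℝ≥0∞) := by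
    intro a
    simp only [Set.indicator_apply, Pi.one_apply, sum_boole]
  calc (r : ℝ≥0∞) * ν Set.univ = ∫⁻ _, (r : ℝ≥0∞) ∂ν := (lintegral_const _).symm
    _ ≤ ∫⁻ a, ∑ i, (s i).indicator 1 a ∂ν :=
        lintegral_mono fun a => (hcount a).symm ▸ Nat.cast_le.mpr (hr a)
    _ = ∑ i, ν (s i) := by
        rw [lintegral_finsetSum _ fun i _ => measurable_one.indicator (hs i)]
        exact Finset.sum_congr rfl fun i _ => lintegral_indicator_one (hs i)

section Conformal

variable {Ω : Type*} [MeasurableSpace Ω] {μ : Measure Ω}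

theorem ProbabilityTheory.iIndepFun.map_comp_perm_eq {ι β : Type*} [Fintype ι] [MeasurableSpace β]
    {Y : ι → Ω → β} (hY : ∀ i, AEMeasurable (Y i) μ) (hind : iIndepFun Y μ)
    (hid : ∀ i j, IdentDistrib (Y i) (Y j) μ μ) (σ : Equiv.Perm ι) :
    μ.map (fun ω i => Y (σ i) ω) = μ.map (fun ω i => Y i ω) := by
  rw [(hind.precomp σ.injective).map_fun_eq_pi_map fun i => hY (σ i), hind.map_fun_eq_pi_map hY]
  exact congrArg Measure.pi (funext fun i => (hid (σ i) i).map_eq)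

theorem measure_card_filter_lt_eq {ι : Type*} [Fintype ι] [DecidableEq ι] {Y : ι → Ω → ℝ}
    (hY : ∀ i, Measurable (Y i)) (hind : iIndepFun Y μ)
    (hid : ∀ i j, IdentDistrib (Y i) (Y j) μ μ) (r : ℕ) (j j' : ι) :
    μ {ω | #{i | Y i ω < Y j ω} < r} = μ {ω | #{i | Y i ω < Y j' ω} < r} := by
  have hS := measurableSet_card_filter_lt j' r
  set σ := Equiv.swap j' j
  have hpre : {ω | #{i | Y i ω < Y j ω} < r} =
      (fun ω i => Y (σ i) ω) ⁻¹' {y : ι → ℝ | #{i | y i < y j'} < r} := by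
    ext ω
    simp only [Set.mem_ofPred_eq, Set.mem_preimage, σ, Equiv.swap_apply_left]
    rw [card_filter, card_filter, ← Equiv.sum_comp (Equiv.swap j' j)]
  rw [hpre, ← Measure.map_apply (measurable_pi_lambda _ fun i => hY (σ i)) hS,
    hind.map_comp_perm_eq (fun i => (hY i).aemeasurable) hid,
    Measure.map_apply (measurable_pi_lambda _ hY) hS]
  rfl

theorem natCast_le_mul_measure_card_filter_lt [IsProbabilityMeasure μ] {n : ℕ}
    {Y : Fin n → Ω → ℝ} (hY : ∀ i, Measurable (Y i)) (hind : iIndepFun Y μ)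
    (hid : ∀ i j, IdentDistrib (Y i) (Y j) μ μ) {r : ℕ} (hr : r ≤ n) (j : Fin n) :
    (r : ℝ≥0∞) ≤ n * μ {ω | #{i | Y i ω < Y j ω} < r} := by
  have hmeas : ∀ j', MeasurableSet {ω | #{i | Y i ω < Y j' ω} < r} := fun j' =>
    measurable_pi_lambda _ hY (measurableSet_card_filter_lt j' r)
  calc (r : ℝ≥0∞) = r * μ Set.univ := by rw [measure_univ, mul_one]
    _ ≤ ∑ j', μ {ω | #{i | Y i ω < Y j' ω} < r} :=
        natCast_mul_le_sum_measure hmeas fun ω =>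
          le_card_filter_card_filter_lt (fun i => Y i ω) hr
    _ = n * μ {ω | #{i | Y i ω < Y j ω} < r} := by
        rw [Finset.sum_congr rfl fun j' _ => measure_card_filter_lt_eq hY hind hid r j' j]
        simp

theorem ofReal_one_sub_le_measure_le_orderStat [IsProbabilityMeasure μ] {m : ℕ}
    {Y : Fin (m + 1) → Ω → ℝ} (hY : ∀ i, Measurable (Y i)) (hind : iIndepFun Y μ)
    (hid : ∀ i j, IdentDistrib (Y i) (Y j) μ μ) {δ : ℝ} {r : ℕ}
    (hr : r = ⌈((m : ℝ) + 1) * (1 - δ)⌉₊) (hrm : r ≤ m) :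
    ENNReal.ofReal (1 - δ) ≤ μ {ω | Y 0 ω ≤ orderStat r fun i => Y i.succ ω} := by
  have hrank := natCast_le_mul_measure_card_filter_lt hY hind hid (hrm.trans m.le_succ) 0
  have hsub : {ω | #{i | Y i ω < Y 0 ω} < r} ⊆ {ω | Y 0 ω ≤ orderStat r fun i => Y i.succ ω} :=
    fun ω hω => le_orderStat_of_card_filter_lt_s7 _ hrm <| by
      simpa [Fin.card_filter_univ_succ] using hω
  have hceil : ENNReal.ofReal (((m : ℝ) + 1) * (1 - δ)) ≤ r := by
    rw [← ENNReal.ofReal_natCast r, hr]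
    exact ENNReal.ofReal_le_ofReal (Nat.le_ceil _)
  refine (ENNReal.mul_le_mul_iff_right (by simp) (by simp : ((m + 1 : ℕ) : ℝ≥0∞) ≠ ⊤)).mp ?_
  calc ((m + 1 : ℕ) : ℝ≥0∞) * ENNReal.ofReal (1 - δ)
      = ENNReal.ofReal (((m : ℝ) + 1) * (1 - δ)) := by
        rw [ENNReal.ofReal_mul (by positivity), ← Nat.cast_succ, ENNReal.ofReal_natCast]
    _ ≤ ((m + 1 : ℕ) : ℝ≥0∞) * μ {ω | #{i | Y i ω < Y 0 ω} < r} := hceil.trans hrank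
    _ ≤ _ := mul_le_mul_right (measure_mono hsub) _

end Conformal

end

theorem conformal_trajectory_safety_general
    {Ω : Type*} [MeasurableSpace Ω] (μ : Measure Ω) [IsProbabilityMeasure μ]
    {Θ : Type*} [MeasurableSpace Θ]
    (k : ℕ) (θ : Ω → Θ) (θc : Fin k → Ω → Θ)
    (W : Fin (k + 1) → Ω → Θ) (hW : W = Fin.cons θ θc)
    (hmeas : ∀ i, Measurable (W i))
    (hindep : iIndepFun W μ)
    (hident : ∀ i j : Fin (k + 1), IdentDistrib (W i) (W j) μ μ)
    {𝒳 : Type*} [MeasurableSpace 𝒳]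
    (N : ℕ)
    (x : ℕ → Θ → 𝒳)
    (hxmeas : ∀ j ≤ N, Measurable fun ϑ => x j ϑ)
    (h : 𝒳 → ℝ) (hh : Measurable h)
    (C : Set 𝒳) (hC : C = {y | 0 ≤ h y})
    (ρ : Θ → ℝ)
    (hρ : ∀ ϑ, ρ ϑ =
      -(Finset.univ.inf' Finset.univ_nonempty fun j : Fin (N + 1) => h (x j ϑ)))
    (δ : ℝ) (hδ : δ ∈ Set.Ioo (0 : ℝ) 1)
    (r : ℕ) (hr : r = ⌈((k : ℝ) + 1) * (1 - δ)⌉₊)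
    -- the calibrated threshold, with the convention `ρ⁽⁽ᵏ⁺¹⁾⁾ = +∞`
    (thresh : Ω → EReal)
    (hthresh : ∀ ω, thresh ω =
      if r ≤ k then ((orderStat r fun i => ρ (θc i ω) : ℝ) : EReal) else ⊤) :
    ENNReal.ofReal (1 - δ) ≤
      μ ({ω | 0 < thresh ω} ∪ {ω | ∀ j ≤ N, x j (θ ω) ∈ C}) := by
  subst hC
  by_cases hrk : r ≤ k
  · have hρmeas : Measurable ρ := by
      rw [funext hρ]
      exact (Finset.measurable_inf'_fun (f := fun (j : Fin (N + 1)) ϑ => h (x j ϑ)) _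
        fun j _ => hh.comp (hxmeas j (Nat.lt_succ_iff.mp j.isLt))).neg
    have hcover := ofReal_one_sub_le_measure_le_orderStat
      (Y := fun i ω => ρ (W i ω)) (fun i => hρmeas.comp (hmeas i))
      (hindep.comp (fun _ => ρ) fun _ => hρmeas) (fun i j => (hident i j).comp hρmeas) hr hrk
    refine hcover.trans (measure_mono fun ω hω => ?_)
    rcases lt_or_ge 0 (thresh ω) with hpos | hnonpos
    · exact Or.inl hpos
    · rw [hthresh, if_pos hrk, EReal.coe_nonpos] at hnonpos
      have hscore : ρ (θ ω) ≤ 0 := by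
        simp only [hW, Fin.cons_zero, Fin.cons_succ] at hω
        exact hω.trans hnonpos
      rw [hρ] at hscore
      exact Or.inr (nonneg_of_neg_inf'_nonpos hscore)
  · have hall : {ω | 0 < thresh ω} = Set.univ :=
      Set.eq_univ_of_forall fun ω => by simp [hthresh, hrk]
    calc ENNReal.ofReal (1 - δ) ≤ 1 := ENNReal.ofReal_le_one.mpr (by linarith [hδ.1])
      _ = μ {ω | 0 < thresh ω} := by rw [hall, measure_univ]
      _ ≤ _ := measure_mono Set.subset_union_left

/-- **Safety guarantee of conformal trajectory calibration (Theorem 2 of the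
paper).**  Let `θ, θ⁽¹⁾, …, θ⁽ᵏ⁾` be i.i.d. parameters, let `ρ` be the
non-conformity score `ρ(ϑ) = -min_{j=0,…,N} h(x_j(ϑ))` of the rolled-out
trajectory, and let `ρ⁽⁽ʳ⁾⁾` be the `r`-th order statistic of
`ρ(θ⁽¹⁾), …, ρ(θ⁽ᵏ⁾)` (equal to `+∞` when `r = k+1`), `r = ⌈(k+1)(1-δ)⌉`.
Then with probability at least `1 - δ`, either `ρ⁽⁽ʳ⁾⁾ > 0` or the true
trajectory remains in the safe set `C = {x | h x ≥ 0}` at every step. -/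
theorem conformal_trajectory_safety
    {Ω : Type*} [MeasurableSpace Ω] (μ : Measure Ω) [IsProbabilityMeasure μ]
    {Θ : Type*} [MeasurableSpace Θ]
    (k : ℕ) (θ : Ω → Θ) (θc : Fin k → Ω → Θ)
    (W : Fin (k + 1) → Ω → Θ) (hW : W = Fin.cons θ θc)
    (hmeas : ∀ i, Measurable (W i))
    (hindep : iIndepFun W μ)
    (hident : ∀ i j : Fin (k + 1), IdentDistrib (W i) (W j) μ μ)
    {𝒳 : Type*} [MeasurableSpace 𝒳] {U : Type*}
    (xInit : 𝒳) (N : ℕ) (u : ℕ → U) (f : 𝒳 → U → Θ → 𝒳)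
    (x : ℕ → Θ → 𝒳)
    (hx0 : ∀ ϑ, x 0 ϑ = xInit)
    (hxs : ∀ j < N, ∀ ϑ, x (j + 1) ϑ = f (x j ϑ) (u j) ϑ)
    (hxmeas : ∀ j ≤ N, Measurable fun ϑ => x j ϑ)
    (h : 𝒳 → ℝ) (hh : Measurable h)
    (C : Set 𝒳) (hC : C = {y | 0 ≤ h y})
    (ρ : Θ → ℝ)
    (hρ : ∀ ϑ, ρ ϑ =
      -(Finset.univ.inf' Finset.univ_nonempty fun j : Fin (N + 1) => h (x j ϑ)))
    (δ : ℝ) (hδ : δ ∈ Set.Ioo (0 : ℝ) 1)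
    (r : ℕ) (hr : r = ⌈((k : ℝ) + 1) * (1 - δ)⌉₊)
    -- the calibrated threshold, with the convention `ρ⁽⁽ᵏ⁺¹⁾⁾ = +∞`
    (thresh : Ω → EReal)
    (hthresh : ∀ ω, thresh ω =
      if r ≤ k then ((orderStat r fun i => ρ (θc i ω) : ℝ) : EReal) else ⊤) :
    ENNReal.ofReal (1 - δ) ≤
      μ ({ω | 0 < thresh ω} ∪ {ω | ∀ j ≤ N, x j (θ ω) ∈ C}) :=
  conformal_trajectory_safety_general μ k θ θc W hW hmeas hindep hident N x hxmeas h hh C hC ρ hρ δ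
    hδ r hr thresh hthresh
end
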